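/- Let μ be a probability measure on ℂ with compact support, and suppose X_1, X_2, … are independent and identically distributed random variables with distribution μ. Fix ε > 0. Then, almost surely, for all sufficiently large n, the polynomial p_n(z) := ∏_{j=1}^n (z − X_j) has no critical points (roots of p_n') outside the set N_μ(ε). -/

import Mathlib

/-! Outside `supp μ`, the Cauchy–Stieltjes transform `m_μ` and the empirical transforms
`m_n(z) = n⁻¹ ∑_{j<n} (z - X_j)⁻¹` are uniformly Lipschitz on every set at positive distance from
`supp μ`. The strong law of large numbers gives `m_n → m_μ` almost surely on a countable dense
subset of the compact set `C = {z : |z| ≤ R, dist(z, supp μ ∪ M_μ) ≥ ε}`, hence uniformly on `C`.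
As `m_μ` has no zeros on `C`, neither has `m_n` for large `n`. A critical point `z` of `p_n`
outside `N_μ(ε)` lies in `C` by the Gauss–Lucas theorem (`supp μ ⊆ closedBall 0 R`), and
`p_n'(z) = p_n(z) ∑_j (z - X_j)⁻¹` with `p_n(z) ≠ 0` forces `m_n(z) = 0`. -/

open MeasureTheory ProbabilityTheory Filter Polynomial

noncomputable section

/-- The support of a measure on ℂ: points all of whose neighborhoods have positive measure. -/
def measSupp (μ : Measure ℂ) : Set ℂ := {x | ∀ U ∈ nhds x, μ U ≠ 0}

/-- The Cauchy–Stieltjes transform m_μ(z) = ∫ dμ(x)/(z − x). -/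
def stieltjes (μ : Measure ℂ) (z : ℂ) : ℂ := ∫ x, (z - x)⁻¹ ∂μ

/-- M_μ : the zero set of the Cauchy–Stieltjes transform outside the support of μ. -/
def Mset (μ : Measure ℂ) : Set ℂ := {z | z ∉ measSupp μ ∧ stieltjes μ z = 0}

/-- N_μ(ε) : the ε-neighborhood of supp(μ) ∪ M_μ. -/
def Nset (μ : Measure ℂ) (ε : ℝ) : Set ℂ :=
  {z | Metric.infDist z (measSupp μ ∪ Mset μ) < ε}

open Metric Set Topology NNReal

theorem tendstoUniformlyOn_of_lipschitzOnWith_of_tendsto_dense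
    {ι α β : Type*} [PseudoMetricSpace α] [PseudoMetricSpace β] {l : Filter ι}
    {F : ι → α → β} {f : α → β} {s D : Set α} {L : ℝ≥0} (hs : IsCompact s) (hDs : D ⊆ s)
    (hsD : s ⊆ closure D) (hF : ∀ i, LipschitzOnWith L (F i) s) (hf : LipschitzOnWith L f s)
    (hD : ∀ x ∈ D, Tendsto (F · x) l (𝓝 (f x))) :
    TendstoUniformlyOn F f l s := by
  rw [Metric.tendstoUniformlyOn_iff]
  intro η hη
  set r : ℝ := η / (3 * (L + 1)) with hr
  have hr0 : 0 < r := by positivity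
  have hLr : L * r < η / 3 := by
    rw [hr, mul_div_assoc', div_lt_div_iff₀ (by positivity) (by positivity)]
    nlinarith [L.2]
  obtain ⟨t, htD, htf, hst⟩ := hs.elim_finite_subcover_image (b := D) (c := (ball · r))
    (fun _ _ => isOpen_ball) fun x hx => by
      obtain ⟨y, hyD, hxy⟩ := Metric.mem_closure_iff.1 (hsD hx) r hr0
      exact mem_biUnion hyD (mem_ball.2 hxy)
  filter_upwards [(htf.eventually_all).2 fun y hy =>
    Metric.tendsto_nhds.1 (hD y (htD hy)) (η / 3) (by positivity)] with i hi x hx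
  obtain ⟨y, hyt, hxy⟩ := mem_iUnion₂.1 (hst hx)
  have hys : y ∈ s := hDs (htD hyt)
  have hxy' : dist x y ≤ r := (mem_ball.1 hxy).le
  calc dist (f x) (F i x)
      ≤ dist (f x) (f y) + dist (F i y) (f y) + dist (F i y) (F i x) := by
        simpa only [dist_comm (f y)] using dist_triangle4 (f x) (f y) (F i y) (F i x)
    _ ≤ L * r + dist (F i y) (f y) + L * r := by
        gcongr
        · exact (hf.dist_le_mul x hx y hys).trans (by gcongr)
        · exact ((hF i).dist_le_mul y hys x hx).trans (by rw [dist_comm]; gcongr)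
    _ < η := by linarith [hi y hyt]

theorem TendstoUniformlyOn.eventually_forall_ne_zero {ι α E : Type*} [TopologicalSpace α]
    [NormedAddCommGroup E] {l : Filter ι} {F : ι → α → E} {f : α → E} {s : Set α}
    (h : TendstoUniformlyOn F f l s) (hs : IsCompact s) (hf : ContinuousOn f s)
    (hf0 : ∀ x ∈ s, f x ≠ 0) :
    ∀ᶠ i in l, ∀ x ∈ s, F i x ≠ 0 := by
  rcases s.eq_empty_or_nonempty with rfl | hne
  · simp
  obtain ⟨x₀, hx₀, hmin⟩ := hs.exists_isMinOn hne (continuous_norm.comp_continuousOn hf)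
  have hδ : 0 < ‖f x₀‖ := norm_pos_iff.2 (hf0 x₀ hx₀)
  filter_upwards [Metric.tendstoUniformlyOn_iff.1 h _ hδ] with i hi x hx hFx
  have := hi x hx
  rw [hFx, dist_zero_right] at this
  exact not_lt_of_ge (hmin hx) this

theorem measSupp_eq_support (μ : Measure ℂ) : measSupp μ = μ.support := by
  ext x
  simp only [measSupp, Set.mem_ofPred_eq, Measure.mem_support_iff_forall, pos_iff_ne_zero]

theorem ae_mem_measSupp (μ : Measure ℂ) : ∀ᵐ x ∂μ, x ∈ measSupp μ :=
  measSupp_eq_support μ ▸ Measure.support_mem_ae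

theorem ae_forall_mem_measSupp {Ω : Type*} [MeasurableSpace Ω] {P : Measure Ω} {μ : Measure ℂ}
    {X : ℕ → Ω → ℂ} (hmeas : ∀ j, Measurable (X j)) (hdist : ∀ j, P.map (X j) = μ) :
    ∀ᵐ ω ∂P, ∀ j, X j ω ∈ measSupp μ :=
  ae_all_iff.2 fun j => ae_of_ae_map (hmeas j).aemeasurable (hdist j ▸ ae_mem_measSupp μ)

theorem norm_inv_sub_le {z x : ℂ} {d : ℝ} (hd : 0 < d) (h : d ≤ dist z x) :
    ‖(z - x)⁻¹‖ ≤ d⁻¹ := by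
  rw [norm_inv, ← dist_eq_norm]
  exact inv_anti₀ hd h

theorem dist_inv_sub_inv_sub_le {z w x : ℂ} {d : ℝ} (hd : 0 < d) (hz : d ≤ dist z x)
    (hw : d ≤ dist w x) : dist (z - x)⁻¹ (w - x)⁻¹ ≤ (d ^ 2)⁻¹ * dist z w := by
  have hzx : z - x ≠ 0 := by rw [← norm_pos_iff, ← dist_eq_norm]; linarith
  have hwx : w - x ≠ 0 := by rw [← norm_pos_iff, ← dist_eq_norm]; linarith
  rw [dist_inv_inv₀ hzx hwx, dist_sub_right, ← dist_eq_norm, ← dist_eq_norm, div_eq_inv_mul, sq]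
  gcongr

theorem integrable_inv_sub {μ : Measure ℂ} [IsFiniteMeasure μ] {z : ℂ} {d : ℝ} (hd : 0 < d)
    (hz : ∀ x ∈ measSupp μ, d ≤ dist z x) : Integrable (fun x => (z - x)⁻¹) μ := by
  refine .of_bound (by fun_prop) d⁻¹ ?_
  filter_upwards [ae_mem_measSupp μ] with x hx
  exact norm_inv_sub_le hd (hz x hx)

theorem lipschitzOnWith_stieltjes (μ : Measure ℂ) [IsProbabilityMeasure μ] {s : Set ℂ}
    {d : ℝ≥0} (hd : 0 < d) (hs : ∀ z ∈ s, ∀ x ∈ measSupp μ, d ≤ dist z x) :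
    LipschitzOnWith (d ^ 2)⁻¹ (stieltjes μ) s := by
  refine .of_dist_le_mul fun z hz w hw => ?_
  rw [dist_eq_norm, stieltjes, stieltjes, ← integral_sub (integrable_inv_sub hd (hs z hz))
    (integrable_inv_sub hd (hs w hw))]
  push_cast
  refine (norm_integral_le_of_norm_le_const (C := (d ^ 2 : ℝ)⁻¹ * dist z w) ?_).trans_eq
    (by simp)
  filter_upwards [ae_mem_measSupp μ] with x hx
  rw [← dist_eq_norm]
  exact dist_inv_sub_inv_sub_le (NNReal.coe_pos.2 hd) (hs z hz x hx) (hs w hw x hx)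

theorem stieltjes_ne_zero_of_infDist_pos {μ : Measure ℂ} {z : ℂ}
    (hz : 0 < infDist z (measSupp μ ∪ Mset μ)) : stieltjes μ z ≠ 0 := fun h0 => by
  have hzS : z ∈ measSupp μ ∪ Mset μ := by
    by_cases hzK : z ∈ measSupp μ
    exacts [Or.inl hzK, Or.inr ⟨hzK, h0⟩]
  exact hz.ne' (infDist_zero_of_mem hzS)

def empiricalStieltjes (x : ℕ → ℂ) (n : ℕ) (z : ℂ) : ℂ :=
  (n : ℝ)⁻¹ • ∑ j ∈ Finset.range n, (z - x j)⁻¹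

theorem lipschitzOnWith_empiricalStieltjes {K s : Set ℂ} {x : ℕ → ℂ} (hx : ∀ j, x j ∈ K)
    {d : ℝ≥0} (hd : 0 < d) (hs : ∀ z ∈ s, ∀ y ∈ K, d ≤ dist z y) (n : ℕ) :
    LipschitzOnWith (d ^ 2)⁻¹ (empiricalStieltjes x n) s := by
  refine .of_dist_le_mul fun z hz w hw => ?_
  rw [empiricalStieltjes, empiricalStieltjes, dist_smul₀, dist_eq_norm, ← Finset.sum_sub_distrib]
  rcases n.eq_zero_or_pos with rfl | hn
  · simp only [CharP.cast_eq_zero, inv_zero, norm_zero, zero_mul]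
    positivity
  calc ‖(n : ℝ)⁻¹‖ * ‖∑ j ∈ Finset.range n, ((z - x j)⁻¹ - (w - x j)⁻¹)‖
      ≤ (n : ℝ)⁻¹ * (n * ((d ^ 2 : ℝ)⁻¹ * dist z w)) := by
        rw [norm_inv, Real.norm_natCast]
        gcongr
        refine (norm_sum_le_of_le _ (n := fun _ => (d ^ 2 : ℝ)⁻¹ * dist z w)
          fun j _ => ?_).trans_eq (by simp)
        rw [← dist_eq_norm]
        exact dist_inv_sub_inv_sub_le (NNReal.coe_pos.2 hd) (hs z hz _ (hx j)) (hs w hw _ (hx j))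
    _ = ↑(d ^ 2)⁻¹ * dist z w := by
        push_cast
        field_simp

theorem eval_derivative_prod_X_sub_C {x : ℕ → ℂ} {n : ℕ} {z : ℂ}
    (hz : ∀ j ∈ Finset.range n, z - x j ≠ 0) :
    (∏ j ∈ Finset.range n, (X - C (x j))).derivative.eval z
      = (∏ j ∈ Finset.range n, (z - x j)) * ∑ j ∈ Finset.range n, (z - x j)⁻¹ := by
  induction n with
  | zero => simp
  | succ n ih =>
    have hzn : z - x n ≠ 0 := hz n (Finset.self_mem_range_succ n)
    rw [Finset.prod_range_succ, derivative_mul, eval_add, eval_mul, eval_mul,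
      ih fun j hj => hz j (Finset.mem_range_succ_iff.2 (Finset.mem_range.1 hj).le),
      Finset.prod_range_succ, Finset.sum_range_succ]
    simp only [derivative_sub, derivative_X, derivative_C, sub_zero, eval_one, mul_one,
      eval_sub, eval_X, eval_C, eval_prod]
    field_simp

theorem empiricalStieltjes_eq_zero_of_isRoot_derivative {x : ℕ → ℂ} {n : ℕ} {z : ℂ}
    (hz : ∀ j ∈ Finset.range n, z - x j ≠ 0)
    (hroot : (∏ j ∈ Finset.range n, (X - C (x j))).derivative.IsRoot z) :
    empiricalStieltjes x n z = 0 := by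
  rw [IsRoot, eval_derivative_prod_X_sub_C hz, mul_eq_zero] at hroot
  rw [empiricalStieltjes, hroot.resolve_left (Finset.prod_ne_zero_iff.2 hz), smul_zero]

theorem mem_convexHull_of_mem_roots_derivative_prod {x : ℕ → ℂ} {n : ℕ} {z : ℂ} (hn : 0 < n)
    (hz : z ∈ (∏ j ∈ Finset.range n, (X - C (x j))).derivative.roots) :
    z ∈ convexHull ℝ (x '' Set.Iio n) := by
  have hdeg : 0 < (∏ j ∈ Finset.range n, (X - C (x j))).degree := by
    rw [degree_prod]
    simpa using hn
  refine convexHull_mono ?_ (rootSet_derivative_subset_convexHull_rootSet hdeg ?_)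
  · intro w hw
    rw [mem_rootSet_of_ne (Monic.ne_zero (monic_prod_of_monic _ _ fun j _ => monic_X_sub_C _)),
      coe_aeval_eq_eval, eval_prod, Finset.prod_eq_zero_iff] at hw
    obtain ⟨j, hj, hw⟩ := hw
    exact ⟨j, Finset.mem_range.1 hj, (sub_eq_zero.1 (by simpa using hw)).symm⟩
  · rw [mem_roots'] at hz
    rw [mem_rootSet_of_ne hz.1, coe_aeval_eq_eval]
    exact hz.2

theorem strong_law_ae_of_map_eq {Ω α E : Type*} [MeasurableSpace Ω] [MeasurableSpace α]
    [NormedAddCommGroup E] [NormedSpace ℝ E] [CompleteSpace E] [MeasurableSpace E]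
    [BorelSpace E] {P : Measure Ω} {μ : Measure α} {X : ℕ → Ω → α}
    (hmeas : ∀ j, Measurable (X j)) (hdist : ∀ j, P.map (X j) = μ)
    (hindep : Pairwise fun i j => IndepFun (X i) (X j) P) {f : α → E} (hf : StronglyMeasurable f)
    (hfi : Integrable f μ) :
    ∀ᵐ ω ∂P, Tendsto (fun n : ℕ => (n : ℝ)⁻¹ • ∑ j ∈ Finset.range n, f (X j ω)) atTop
      (𝓝 (∫ x, f x ∂μ)) := by
  have hident : ∀ j, IdentDistrib (f ∘ X j) (f ∘ X 0) P P := fun j =>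
    (IdentDistrib.mk (hmeas j).aemeasurable (hmeas 0).aemeasurable (by rw [hdist, hdist])).comp
      hf.measurable
  have hint : Integrable (f ∘ X 0) P :=
    (integrable_map_measure hf.aestronglyMeasurable (hmeas 0).aemeasurable).1 (hdist 0 ▸ hfi)
  have hmean : P[f ∘ X 0] = ∫ x, f x ∂μ := by
    rw [← hdist 0, integral_map (hmeas 0).aemeasurable hf.aestronglyMeasurable]
    rfl
  have := strong_law_ae (fun j => f ∘ X j) hint
    (fun i j hij => (hindep hij).comp hf.measurable hf.measurable) hident
  rwa [hmean] at this

theorem ae_tendstoUniformlyOn_empiricalStieltjes {Ω : Type*} [MeasurableSpace Ω]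
    {P : Measure Ω} {μ : Measure ℂ} [IsProbabilityMeasure μ] {X : ℕ → Ω → ℂ}
    (hmeas : ∀ j, Measurable (X j)) (hdist : ∀ j, P.map (X j) = μ)
    (hindep : Pairwise fun i j => IndepFun (X i) (X j) P) {s : Set ℂ} (hs : IsCompact s)
    {d : ℝ≥0} (hd : 0 < d) (hsK : ∀ z ∈ s, ∀ x ∈ measSupp μ, d ≤ dist z x) :
    ∀ᵐ ω ∂P, TendstoUniformlyOn (fun n => empiricalStieltjes (X · ω) n) (stieltjes μ) atTop s := by
  obtain ⟨D, hDs, hDc, hsD⟩ := hs.isSeparable.exists_countable_dense_subset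
  have hconv : ∀ᵐ ω ∂P, ∀ c ∈ D,
      Tendsto (fun n => empiricalStieltjes (X · ω) n c) atTop (𝓝 (stieltjes μ c)) :=
    (ae_ball_iff hDc).2 fun c hc => strong_law_ae_of_map_eq (f := fun x => (c - x)⁻¹) hmeas
      hdist hindep (measurable_const.sub measurable_id).inv.stronglyMeasurable
      (integrable_inv_sub (NNReal.coe_pos.2 hd) (hsK c (hDs hc)))
  filter_upwards [ae_forall_mem_measSupp hmeas hdist, hconv] with ω hωK hωD
  exact tendstoUniformlyOn_of_lipschitzOnWith_of_tendsto_dense hs hDs hsD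
    (lipschitzOnWith_empiricalStieltjes hωK hd hsK) (lipschitzOnWith_stieltjes μ hd hsK) hωD

theorem no_outliers_unperturbed_almost_sure_general
    {Ω : Type*} [MeasurableSpace Ω] (P : Measure Ω)
    (μ : Measure ℂ) [IsProbabilityMeasure μ] (hsupp : IsCompact (measSupp μ))
    (X : ℕ → Ω → ℂ) (hmeas : ∀ j, Measurable (X j))
    (hdist : ∀ j, Measure.map (X j) P = μ)
    (hindep : iIndepFun X P)
    (ε : ℝ) (hε : 0 < ε) :
    ∀ᵐ ω ∂P, ∀ᶠ n in atTop,
      ∀ z ∈ ((∏ j ∈ Finset.range n,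
          (Polynomial.X - Polynomial.C (X j ω))).derivative).roots,
        z ∈ Nset μ ε := by
  lift ε to ℝ≥0 using hε.le
  obtain ⟨R, hR⟩ := hsupp.isBounded.subset_closedBall 0
  set S := measSupp μ ∪ Mset μ
  set C := closedBall (0 : ℂ) R ∩ {z | ε ≤ infDist z S}
  have hC : IsCompact C :=
    (isCompact_closedBall 0 R).inter_right (isClosed_le continuous_const (continuous_infDist_pt S))
  have hCK : ∀ z ∈ C, ∀ x ∈ measSupp μ, ε ≤ dist z x := fun z hz x hx =>
    hz.2.trans (infDist_le_dist_of_mem (Or.inl hx))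
  have hmC : ∀ z ∈ C, stieltjes μ z ≠ 0 := fun z hz =>
    stieltjes_ne_zero_of_infDist_pos (hε.trans_le hz.2)
  filter_upwards [ae_forall_mem_measSupp hmeas hdist, ae_tendstoUniformlyOn_empiricalStieltjes
    hmeas hdist (fun i j hij => hindep.indepFun hij) hC hε hCK] with ω hωK hωU
  filter_upwards [hωU.eventually_forall_ne_zero hC (lipschitzOnWith_stieltjes μ hε hCK).continuousOn
    hmC, eventually_gt_atTop 0] with n hn hn0 z hz
  by_contra hzN
  have hzS : ε ≤ infDist z S := le_of_not_gt hzN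
  have hzC : z ∈ C := ⟨(convex_closedBall 0 R).convexHull_subset_iff.2
    (by rintro _ ⟨j, -, rfl⟩; exact hR (hωK j))
    (mem_convexHull_of_mem_roots_derivative_prod hn0 hz), hzS⟩
  have hzX : ∀ j ∈ Finset.range n, z - X j ω ≠ 0 := fun j _ =>
    sub_ne_zero.2 (dist_pos.1 (hε.trans_le (hCK z hzC _ (hωK j))))
  exact hn z hzC (empiricalStieltjes_eq_zero_of_isRoot_derivative hzX (mem_roots'.1 hz).2)

/-- **Corollary (no outliers, almost sure version).**
Let μ be a compactly supported probability measure on ℂ and X₁, X₂, … iid with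
distribution μ.  Fix ε > 0.  Then almost surely, for all sufficiently large n, the
polynomial pₙ(z) = ∏_{j=1}^n (z − X_j) has no critical points outside N_μ(ε). -/
theorem no_outliers_unperturbed_almost_sure
    {Ω : Type*} [MeasurableSpace Ω] (P : Measure Ω) [IsProbabilityMeasure P]
    (μ : Measure ℂ) [IsProbabilityMeasure μ] (hsupp : IsCompact (measSupp μ))
    (X : ℕ → Ω → ℂ) (hmeas : ∀ j, Measurable (X j))
    (hdist : ∀ j, Measure.map (X j) P = μ)
    (hindep : iIndepFun X P)
    (ε : ℝ) (hε : 0 < ε) :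
    ∀ᵐ ω ∂P, ∀ᶠ n in atTop,
      ∀ z ∈ ((∏ j ∈ Finset.range n,
          (Polynomial.X - Polynomial.C (X j ω))).derivative).roots,
        z ∈ Nset μ ε :=
  no_outliers_unperturbed_almost_sure_general P μ hsupp X hmeas hdist hindep ε hε
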